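/- arXiv:2405.19705 — 9 statements merged into one kernel-verified Lean document; each statement's English description precedes it below -/
import Mathlib

section
/- For an α-exp-concave function f on a convex domain X with diameter at most D and gradients bounded by G, for all x, y in X: f(y) ≥ f(x) + ⟨∇f(x), y−x⟩ + (β/2)⟨∇f(x), y−x⟩², where β = (1/2)·min{1/(4GD), α}. -/
local notation "⟪" x ", " y "⟫" => @inner ℝ _ _ x y

/-!
Concavity of `h = exp (-α f)` gives the first-order bound `h y ≤ h x + ⟪∇h x, y - x⟫`, i.e.
`exp (-α (f y - f x)) ≤ 1 - α z` with `z = ⟪∇f x, y - x⟫`. Raising to the power `γ / α ≤ 1` and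
using Bernoulli's inequality passes to the smaller parameter `γ = min (1 / (4GD)) α`:
`exp (-γ (f y - f x)) ≤ 1 - γ z`. Since `|γ z| ≤ 1/4` by Cauchy–Schwarz,
`1 - γ z ≤ exp (-γ z - (γ z)² / 4)`, and comparing exponents gives the claim.
-/

open Real AffineMap

theorem ConcaveOn.le_add_of_hasFDerivAt {E : Type*} [NormedAddCommGroup E] [NormedSpace ℝ E]
    {s : Set E} {g : E → ℝ} {g' : E →L[ℝ] ℝ} {x y : E} (hg : ConcaveOn ℝ s g) (hx : x ∈ s)
    (hy : y ∈ s) (hg' : HasFDerivAt g g' x) : g y ≤ g x + g' (y - x) := by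
  have hline : ConcaveOn ℝ (lineMap (k := ℝ) x y ⁻¹' s) (g ∘ lineMap (k := ℝ) x y) :=
    hg.comp_affineMap _
  have hderiv : HasDerivAt (g ∘ lineMap (k := ℝ) x y) (g' (y - x)) 0 := by
    refine HasFDerivAt.comp_hasDerivAt (0 : ℝ) ?_ hasDerivAt_lineMap
    simpa using hg'
  have hslope := hline.slope_le_of_hasDerivAt (x := 0) (y := 1) (by simpa) (by simpa) one_pos hderiv
  simpa [slope_def_field, add_comm] using hslope

theorem exp_neg_mul_sub_le_of_concaveOn {E : Type*} [NormedAddCommGroup E] [NormedSpace ℝ E]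
    {s : Set E} {f : E → ℝ} {f' : E →L[ℝ] ℝ} {x y : E} {α : ℝ}
    (hexp : ConcaveOn ℝ s (fun x => exp (-α * f x))) (hx : x ∈ s) (hy : y ∈ s)
    (hf : HasFDerivAt f f' x) : exp (-α * (f y - f x)) ≤ 1 - α * f' (y - x) := by
  have hfirst : exp (-α * f y) ≤ exp (-α * f x) * (1 - α * f' (y - x)) := by
    have := hexp.le_add_of_hasFDerivAt hx hy (hf.const_mul (-α)).exp
    simp only [FunLike.coe_smul, Pi.smul_apply, smul_eq_mul] at this
    linarith
  calc exp (-α * (f y - f x)) = exp (-α * f y) / exp (-α * f x) := by rw [← exp_sub]; ring_nf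
    _ ≤ 1 - α * f' (y - x) := by rwa [div_le_iff₀' (exp_pos _)]

theorem one_add_div_three_pow_three_le_exp {t : ℝ} (ht : -3 ≤ t) : (1 + t / 3) ^ 3 ≤ exp t :=
  calc (1 + t / 3) ^ 3 ≤ exp (t / 3) ^ 3 :=
        pow_le_pow_left₀ (by linarith) ((add_comm _ _).trans_le (add_one_le_exp _)) 3
    _ = exp t := by rw [← exp_nat_mul]; ring_nf

theorem one_sub_le_exp_neg_sub_sq_div_four {a : ℝ} (ha : |a| ≤ 1 / 4) :
    1 - a ≤ exp (-a - a ^ 2 / 4) := by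
  obtain ⟨ha₁, ha₂⟩ := abs_le.1 ha
  refine le_trans ?_ (one_add_div_three_pow_three_le_exp (by nlinarith))
  have hfactor : (1 + (-a - a ^ 2 / 4) / 3) ^ 3 - (1 - a)
      = a ^ 2 * (-1 / 4 + (4 + a) ^ 2 / 48 - a * (4 + a) ^ 3 / 1728) := by ring
  have hcofactor : 0 ≤ -1 / 4 + (4 + a) ^ 2 / 48 - a * (4 + a) ^ 3 / 1728 := by
    nlinarith [mul_nonneg (sub_nonneg.2 ha₂) (neg_le_iff_add_nonneg.1 ha₁), sq_nonneg a]
  nlinarith [mul_nonneg (sq_nonneg a) hcofactor]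

theorem add_mul_sq_div_four_le_of_exp_neg_mul_le {α γ z t : ℝ} (hα : 0 < α) (hγ : 0 ≤ γ)
    (hγα : γ ≤ α) (hγz : |γ * z| ≤ 1 / 4) (h : exp (-α * t) ≤ 1 - α * z) :
    z + γ * z ^ 2 / 4 ≤ t := by
  have hz : 0 ≤ 1 - α * z := (exp_pos _).le.trans h
  rcases hγ.eq_or_lt with rfl | hγ
  · have : exp (-α * t) ≤ exp (-α * z) := h.trans (by linarith [add_one_le_exp (-α * z)])
    nlinarith [exp_le_exp.1 this]
  have key : exp (-γ * t) ≤ exp (-γ * (z + γ * z ^ 2 / 4)) :=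
    calc exp (-γ * t) = exp (-α * t) ^ (γ / α) := by rw [← exp_mul]; field_simp
      _ ≤ (1 - α * z) ^ (γ / α) := rpow_le_rpow (exp_pos _).le h (by positivity)
      _ ≤ 1 - γ * z := by
        have := rpow_one_add_le_one_add_mul_self (s := -(α * z)) (by linarith) (by positivity)
          ((div_le_one hα).2 hγα)
        convert this using 2 <;> field_simp <;> ring
      _ ≤ exp (-γ * (z + γ * z ^ 2 / 4)) := by
        convert one_sub_le_exp_neg_sub_sq_div_four hγz using 2; ring
  nlinarith [exp_le_exp.1 key]

theorem abs_mul_le_one_div_four {γ z c : ℝ} (hγ : 0 ≤ γ) (hγc : γ ≤ 1 / (4 * c))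
    (hz : |z| ≤ c) : |γ * z| ≤ 1 / 4 := by
  have hc : 0 ≤ c := (abs_nonneg z).trans hz
  calc |γ * z| = γ * |z| := by rw [abs_mul, abs_of_nonneg hγ]
    _ ≤ 1 / (4 * c) * c := mul_le_mul hγc hz (abs_nonneg _) (by positivity)
    _ ≤ 1 / 4 := by
      rw [one_div_mul_eq_div]
      exact div_le_of_le_mul₀ (by positivity) (by norm_num) (by linarith)

theorem exp_concave_lower_bound_general {d : ℕ} (X : Set (EuclideanSpace ℝ (Fin d)))
    (f : EuclideanSpace ℝ (Fin d) → ℝ)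
    (f' : EuclideanSpace ℝ (Fin d) → EuclideanSpace ℝ (Fin d))
    (α G D : ℝ) (hα : 0 < α)
    (hdiam : ∀ x ∈ X, ∀ y ∈ X, ‖x - y‖ ≤ D)
    (hgrad : ∀ x ∈ X, HasGradientAt f (f' x) x)
    (hexp : ConcaveOn ℝ X (fun x => Real.exp (-α * f x)))
    (hGbound : ∀ x ∈ X, ‖f' x‖ ≤ G) :
    ∀ x ∈ X, ∀ y ∈ X,
      f y ≥ f x + ⟪f' x, y - x⟫
        + ((1 / 2) * min (1 / (4 * G * D)) α) / 2 * ⟪f' x, y - x⟫ ^ 2 := by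
  intro x hx y hy
  set γ := min (1 / (4 * G * D)) α
  have hG : 0 ≤ G := (norm_nonneg _).trans (hGbound x hx)
  have hD : 0 ≤ D := (norm_nonneg _).trans (hdiam x hx x hx)
  have hγ : 0 ≤ γ := le_min (by positivity) hα.le
  have hz : |⟪f' x, y - x⟫| ≤ G * D := (abs_real_inner_le_norm _ _).trans <|
    mul_le_mul (hGbound x hx) (hdiam y hy x hx) (norm_nonneg _) hG
  have hγz : |γ * ⟪f' x, y - x⟫| ≤ 1 / 4 :=
    abs_mul_le_one_div_four hγ ((min_le_left _ _).trans_eq (by ring)) hz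
  have hfirst : exp (-α * (f y - f x)) ≤ 1 - α * ⟪f' x, y - x⟫ := by
    simpa using exp_neg_mul_sub_le_of_concaveOn hexp hx hy (hgrad x hx).hasFDerivAt
  linarith [add_mul_sq_div_four_le_of_exp_neg_mul_le hα hγ (min_le_right _ _) hγz hfirst]

/-- For an α-exp-concave function f on a convex domain X with diameter at most D and
gradients bounded by G, for all x, y ∈ X:
f(y) ≥ f(x) + ⟨∇f(x), y−x⟩ + (β/2)⟨∇f(x), y−x⟩², where β = (1/2)·min{1/(4GD), α}. -/
theorem exp_concave_lower_bound {d : ℕ} (X : Set (EuclideanSpace ℝ (Fin d)))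
    (f : EuclideanSpace ℝ (Fin d) → ℝ)
    (f' : EuclideanSpace ℝ (Fin d) → EuclideanSpace ℝ (Fin d))
    (α G D : ℝ) (hα : 0 < α) (hG : 0 < G) (hD : 0 < D)
    (hX : Convex ℝ X)
    (hdiam : ∀ x ∈ X, ∀ y ∈ X, ‖x - y‖ ≤ D)
    (hgrad : ∀ x ∈ X, HasGradientAt f (f' x) x)
    (hexp : ConcaveOn ℝ X (fun x => Real.exp (-α * f x)))
    (hGbound : ∀ x ∈ X, ‖f' x‖ ≤ G) :
    ∀ x ∈ X, ∀ y ∈ X,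
      f y ≥ f x + ⟪f' x, y - x⟫
        + ((1 / 2) * min (1 / (4 * G * D)) α) / 2 * ⟪f' x, y - x⟫ ^ 2 :=
  exp_concave_lower_bound_general X f f' α G D hα hdiam hgrad hexp hGbound
end

section
/- For the surrogate loss g(y) = ⟨∇f(x₀), y⟩ − 1{⟨∇f(x₀), v⟩ < 0}·⟨∇f(x₀), v⟩·S_X(y), every subgradient u of g at y₀ satisfies ‖u‖ ≤ ‖∇f(x₀)‖. -/
local notation "⟪" x ", " y "⟫" => @inner ℝ _ _ x y

/-!
Let `v = (y₀ - x₀) / ‖y₀ - x₀‖` and `c = min ⟪gf, v⟫ 0 ≤ 0`, where `gf` stands for `∇f(x₀)`.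
If `u` is a subgradient of `g` at `y₀`, then `a = u - gf` is a subgradient of the
`(-c)`-Lipschitz function `-c • S_X`, so `‖a‖ ≤ -c`. Since `x₀` is the projection of `y₀`, the
set `X` lies in the half-space `⟪v, · - x₀⟫ ≤ 0`, hence `S_X` grows with unit slope along the ray
`x₀ + s • v` through `y₀`; testing the subgradient inequality in both directions along this ray
gives `⟪a, v⟫ = -c`. Together these force `a = -c • v`, and `‖gf - c • v‖ ≤ ‖gf‖` because `c` is
either `0` or the component of `gf` along `v`.
-/

open Metric

section

variable {E : Type*} [NormedAddCommGroup E] [InnerProductSpace ℝ E]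

theorem inner_sub_nonpos_of_forall_dist_le {X : Set E} (hX : Convex ℝ X) {y x₀ : E}
    (hx₀ : x₀ ∈ X) (hmin : ∀ z ∈ X, dist y x₀ ≤ dist y z) {z : E} (hz : z ∈ X) :
    ⟪y - x₀, z - x₀⟫ ≤ 0 := by
  have : Nonempty X := ⟨⟨x₀, hx₀⟩⟩
  refine (norm_eq_iInf_iff_real_inner_le_zero hX hx₀).1 (le_antisymm ?_ ?_) z hz
  · exact le_ciInf fun w => by simpa only [dist_eq_norm] using hmin w w.2
  · exact ciInf_le (f := fun w : X => ‖y - w‖)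
      ⟨0, Set.forall_mem_range.2 fun _ => norm_nonneg _⟩ ⟨x₀, hx₀⟩

theorem inner_sub_le_infDist {X : Set E} (hXne : X.Nonempty) {v x₀ : E} (hv : ‖v‖ ≤ 1)
    (hsep : ∀ z ∈ X, ⟪v, z - x₀⟫ ≤ 0) (y : E) : ⟪v, y - x₀⟫ ≤ infDist y X := by
  refine (le_infDist hXne).2 fun z hz => ?_
  calc ⟪v, y - x₀⟫ = ⟪v, y - z⟫ + ⟪v, z - x₀⟫ := by rw [← inner_add_right, sub_add_sub_cancel]
    _ ≤ ‖v‖ * ‖y - z‖ + 0 := add_le_add (real_inner_le_norm _ _) (hsep z hz)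
    _ ≤ dist y z := by
      rw [add_zero, dist_eq_norm]; exact mul_le_of_le_one_left (norm_nonneg _) hv

theorem infDist_add_smul_eq {X : Set E} {v x₀ : E} (hx₀ : x₀ ∈ X) (hv : ‖v‖ = 1)
    (hsep : ∀ z ∈ X, ⟪v, z - x₀⟫ ≤ 0) {s : ℝ} (hs : 0 ≤ s) : infDist (x₀ + s • v) X = s := by
  apply le_antisymm
  · simpa [dist_eq_norm, norm_smul, hv, abs_of_nonneg hs] using
      infDist_le_dist_of_mem (x := x₀ + s • v) hx₀
  · simpa [real_inner_smul_right, real_inner_self_eq_norm_sq, hv] using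
      inner_sub_le_infDist ⟨x₀, hx₀⟩ hv.le hsep (x₀ + s • v)

theorem norm_le_of_forall_inner_le_mul_sub {φ : E → ℝ} (hφ : LipschitzWith 1 φ) {K : ℝ}
    (hK : 0 ≤ K) {a y₀ : E} (ha : ∀ y, ⟪a, y - y₀⟫ ≤ K * (φ y - φ y₀)) : ‖a‖ ≤ K := by
  have hlip : φ (y₀ + a) - φ y₀ ≤ ‖a‖ := by
    have := hφ.le_add_mul (y₀ + a) y₀
    rw [dist_eq_norm, add_sub_cancel_left] at this
    push_cast at this
    linarith
  have hsq : ‖a‖ ^ 2 ≤ K * ‖a‖ :=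
    calc ‖a‖ ^ 2 = ⟪a, y₀ + a - y₀⟫ := by rw [add_sub_cancel_left, real_inner_self_eq_norm_sq]
      _ ≤ K * (φ (y₀ + a) - φ y₀) := ha _
      _ ≤ K * ‖a‖ := mul_le_mul_of_nonneg_left hlip hK
  nlinarith [norm_nonneg a]

theorem inner_eq_of_forall_inner_le_mul_sub {φ : E → ℝ} {K r : ℝ} {a y₀ v : E} (hr : 0 < r)
    (hfwd : φ (y₀ + r • v) = φ y₀ + r) (hbwd : φ (y₀ - r • v) = φ y₀ - r)
    (ha : ∀ y, ⟪a, y - y₀⟫ ≤ K * (φ y - φ y₀)) : ⟪a, v⟫ = K := by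
  have h₁ := ha (y₀ + r • v)
  have h₂ := ha (y₀ - r • v)
  rw [hfwd, add_sub_cancel_left, add_sub_cancel_left, real_inner_smul_right] at h₁
  rw [hbwd, sub_sub_cancel_left, sub_sub_cancel_left, inner_neg_right,
    real_inner_smul_right] at h₂
  exact le_antisymm (le_of_mul_le_mul_left (by linarith) hr)
    (le_of_mul_le_mul_left (by linarith) hr)

theorem eq_smul_of_norm_le_of_inner_eq {a v : E} {K : ℝ} (hv : ‖v‖ = 1) (ha : ‖a‖ ≤ K)
    (hav : ⟪a, v⟫ = K) : a = K • v := by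
  have hsq : ‖a - K • v‖ ^ 2 = ‖a‖ ^ 2 - K ^ 2 := by
    rw [norm_sub_sq_real, real_inner_smul_right, hav, norm_smul, hv, Real.norm_eq_abs, mul_one,
      sq_abs]
    ring
  have hle : ‖a‖ ^ 2 ≤ K ^ 2 := pow_le_pow_left₀ (norm_nonneg a) ha 2
  rw [← sub_eq_zero, ← norm_eq_zero]
  nlinarith [norm_nonneg (a - K • v)]

theorem norm_sub_ite_smul_le {w v : E} (hv : ‖v‖ = 1) :
    ‖w - (if ⟪w, v⟫ < 0 then ⟪w, v⟫ else 0) • v‖ ≤ ‖w‖ := by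
  split_ifs
  · have hsq : ‖w - ⟪w, v⟫ • v‖ ^ 2 = ‖w‖ ^ 2 - ⟪w, v⟫ ^ 2 := by
      rw [norm_sub_sq_real, real_inner_smul_right, norm_smul, hv, Real.norm_eq_abs, mul_one,
        sq_abs]
      ring
    exact le_of_sq_le_sq (by nlinarith) (norm_nonneg w)
  · rw [zero_smul, sub_zero]

end

theorem surrogate_subgradient_norm_le_general {d : ℕ} (X : Set (EuclideanSpace ℝ (Fin d)))
    (hX : Convex ℝ X)
    (y₀ : EuclideanSpace ℝ (Fin d))
    (x₀ : EuclideanSpace ℝ (Fin d)) (hx₀ : x₀ ∈ X)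
    (hne : y₀ ≠ x₀)
    (hproj : ∀ z ∈ X, dist y₀ x₀ ≤ dist y₀ z)
    (gf u : EuclideanSpace ℝ (Fin d))
    (g : EuclideanSpace ℝ (Fin d) → ℝ)
    (hg : ∀ y, g y =
      ⟪gf, y⟫ -
        (if ⟪gf, ‖y₀ - x₀‖⁻¹ • (y₀ - x₀)⟫ < 0
          then ⟪gf, ‖y₀ - x₀‖⁻¹ • (y₀ - x₀)⟫ else 0) * Metric.infDist y X)
    (hsub : ∀ y, g y₀ + ⟪u, y - y₀⟫ ≤ g y) :
    ‖u‖ ≤ ‖gf‖ := by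
  have hr : 0 < ‖y₀ - x₀‖ := norm_pos_iff.2 (sub_ne_zero.2 hne)
  set r := ‖y₀ - x₀‖
  set v := r⁻¹ • (y₀ - x₀) with hv_def
  set c := if ⟪gf, v⟫ < 0 then ⟪gf, v⟫ else 0
  have hv : ‖v‖ = 1 := norm_smul_inv_norm (sub_ne_zero.2 hne)
  have hy₀_ray : y₀ = x₀ + r • v := by rw [hv_def, smul_inv_smul₀ hr.ne', add_sub_cancel]
  have hsep (z : EuclideanSpace ℝ (Fin d)) (hz : z ∈ X) : ⟪v, z - x₀⟫ ≤ 0 := by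
    rw [real_inner_smul_left]
    exact mul_nonpos_of_nonneg_of_nonpos (by positivity)
      (inner_sub_nonpos_of_forall_dist_le hX hx₀ hproj hz)
  have hray {s : ℝ} (hs : 0 ≤ s) : infDist (x₀ + s • v) X = s :=
    infDist_add_smul_eq hx₀ hv hsep hs
  have hc : 0 ≤ -c := by simp only [c]; split_ifs <;> linarith
  have hsubgrad (y : EuclideanSpace ℝ (Fin d)) :
      ⟪u - gf, y - y₀⟫ ≤ -c * (infDist y X - infDist y₀ X) := by
    have := hsub y
    rw [hg, hg] at this
    rw [inner_sub_left, inner_sub_right gf]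
    linarith
  have hnorm := norm_le_of_forall_inner_le_mul_sub (lipschitz_infDist_pt X) hc hsubgrad
  have hinner : ⟪u - gf, v⟫ = -c := by
    refine inner_eq_of_forall_inner_le_mul_sub hr ?_ ?_ hsubgrad
    · rw [hy₀_ray, add_assoc, ← add_smul, hray (by positivity), hray hr.le]
    · rw [hy₀_ray, add_sub_cancel_right, hray hr.le, sub_self, infDist_zero_of_mem hx₀]
  rw [← sub_add_cancel u gf, eq_smul_of_norm_le_of_inner_eq hv hnorm hinner, add_comm, neg_smul,
    ← sub_eq_add_neg]
  exact norm_sub_ite_smul_le hv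

/-- Every subgradient u of the surrogate loss
g(y) = ⟨∇f(x₀), y⟩ − 1{⟨∇f(x₀),v⟩<0}·⟨∇f(x₀),v⟩·S_X(y) at y₀
satisfies ‖u‖ ≤ ‖∇f(x₀)‖. Here `gf` plays the role of ∇f(x₀). -/
theorem surrogate_subgradient_norm_le {d : ℕ} (X Y : Set (EuclideanSpace ℝ (Fin d)))
    (hXc : IsClosed X) (hX : Convex ℝ X) (hXne : X.Nonempty)
    (hYc : IsClosed Y) (hY : Convex ℝ Y) (hXY : X ⊆ Y)
    (y₀ : EuclideanSpace ℝ (Fin d)) (hy₀ : y₀ ∈ Y)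
    (x₀ : EuclideanSpace ℝ (Fin d)) (hx₀ : x₀ ∈ X)
    (hne : y₀ ≠ x₀)
    (hproj : ∀ z ∈ X, dist y₀ x₀ ≤ dist y₀ z)
    (gf u : EuclideanSpace ℝ (Fin d))
    (g : EuclideanSpace ℝ (Fin d) → ℝ)
    (hg : ∀ y, g y =
      ⟪gf, y⟫ -
        (if ⟪gf, ‖y₀ - x₀‖⁻¹ • (y₀ - x₀)⟫ < 0
          then ⟪gf, ‖y₀ - x₀‖⁻¹ • (y₀ - x₀)⟫ else 0) * Metric.infDist y X)
    (hsub : ∀ y, g y₀ + ⟪u, y - y₀⟫ ≤ g y) :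
    ‖u‖ ≤ ‖gf‖ :=
  surrogate_subgradient_norm_le_general X hX y₀ x₀ hx₀ hne hproj gf u g hg hsub
end

section
/- With the surrogate loss g as above, for every x ∈ X: ⟨∇f(x₀), x₀ − x⟩ ≤ g(y₀) − g(x) ≤ ⟨∇g(y₀), y₀ − x⟩, where ∇g(y₀) denotes the canonical subgradient of g at y₀. -/
local notation "⟪" x ", " y "⟫" => @inner ℝ _ _ x y

/-- For the surrogate loss g, for every x ∈ X:
⟨∇f(x₀), x₀ − x⟩ ≤ g(y₀) − g(x) ≤ ⟨∇g(y₀), y₀ − x⟩, where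
∇g(y₀) = ∇f(x₀) − 1{⟨∇f(x₀),v⟩<0}·⟨∇f(x₀),v⟩·v is the canonical subgradient.
Here `gf` plays the role of ∇f(x₀) and `v = (y₀−x₀)/‖y₀−x₀‖`. -/
theorem surrogate_sandwich {d : ℕ} (X Y : Set (EuclideanSpace ℝ (Fin d)))
    (hXc : IsClosed X) (hX : Convex ℝ X) (hXne : X.Nonempty)
    (hYc : IsClosed Y) (hY : Convex ℝ Y) (hXY : X ⊆ Y)
    (y₀ : EuclideanSpace ℝ (Fin d)) (hy₀ : y₀ ∈ Y)
    (x₀ : EuclideanSpace ℝ (Fin d)) (hx₀ : x₀ ∈ X)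
    (hne : y₀ ≠ x₀)
    (hproj : ∀ z ∈ X, dist y₀ x₀ ≤ dist y₀ z)
    (gf : EuclideanSpace ℝ (Fin d))
    (v : EuclideanSpace ℝ (Fin d)) (hv : v = ‖y₀ - x₀‖⁻¹ • (y₀ - x₀))
    (g : EuclideanSpace ℝ (Fin d) → ℝ)
    (hg : ∀ y, g y =
      ⟪gf, y⟫ - (if ⟪gf, v⟫ < 0 then ⟪gf, v⟫ else 0) * Metric.infDist y X)
    (gg : EuclideanSpace ℝ (Fin d))
    (hgg : gg = gf - (if ⟪gf, v⟫ < 0 then ⟪gf, v⟫ else 0) • v) :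
    ∀ x ∈ X, ⟪gf, x₀ - x⟫ ≤ g y₀ - g x ∧ g y₀ - g x ≤ ⟪gg, y₀ - x⟫ := by
  intro x hx
  set c : ℝ := if ⟪gf, v⟫ < 0 then ⟪gf, v⟫ else 0 with hc
  have hn0 : (0:ℝ) < ‖y₀ - x₀‖ := by
    simpa [norm_pos_iff, sub_eq_zero] using hne
  haveI : Nonempty X := hXne.to_subtype
  have hinf : Metric.infDist y₀ X = ‖y₀ - x₀‖ := by
    rw [← dist_eq_norm, Metric.infDist_eq_iInf]
    refine le_antisymm
      (ciInf_le ⟨0, fun _ ⟨w, h⟩ => h ▸ dist_nonneg⟩ (⟨x₀, hx₀⟩ : X))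
      (le_ciInf fun w => hproj w w.2)
  have hinfx : Metric.infDist x X = 0 := Metric.infDist_zero_of_mem hx
  -- projection obtuse angle
  have hbdd : BddBelow (Set.range fun w : X => ‖y₀ - (w : EuclideanSpace ℝ (Fin d))‖) := by
    refine ⟨0, ?_⟩
    rintro _ ⟨w, rfl⟩
    positivity
  have hmin : ‖y₀ - x₀‖ = ⨅ w : X, ‖y₀ - w‖ := by
    refine le_antisymm (le_ciInf fun w => ?_) (ciInf_le hbdd (⟨x₀, hx₀⟩ : X))
    simpa [dist_eq_norm] using hproj w w.2
  have hobtuse : ⟪y₀ - x₀, x - x₀⟫ ≤ 0 :=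
    (norm_eq_iInf_iff_real_inner_le_zero hX hx₀).1 hmin x hx
  have hvy : ⟪gf, v⟫ = ‖y₀ - x₀‖⁻¹ * ⟪gf, y₀ - x₀⟫ := by
    rw [hv, real_inner_smul_right]
  have hvx : ⟪v, y₀ - x⟫ = ‖y₀ - x₀‖⁻¹ * (⟪y₀ - x₀, y₀ - x₀⟫ + ⟪y₀ - x₀, x₀ - x⟫) := by
    rw [hv, real_inner_smul_left]
    congr 1
    rw [← inner_add_right]
    congr 1
    abel
  have hsq : ⟪y₀ - x₀, y₀ - x₀⟫ = ‖y₀ - x₀‖ * ‖y₀ - x₀‖ := real_inner_self_eq_norm_mul_norm _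
  have hox : (0:ℝ) ≤ ⟪y₀ - x₀, x₀ - x⟫ := by
    have : ⟪y₀ - x₀, x₀ - x⟫ = -⟪y₀ - x₀, x - x₀⟫ := by
      rw [← inner_neg_right]; congr 1; abel
    linarith [hobtuse, this.ge, this.le]
  have hgy : g y₀ = ⟪gf, y₀⟫ - c * ‖y₀ - x₀‖ := by rw [hg, hinf]
  have hgx : g x = ⟪gf, x⟫ := by rw [hg, hinfx]; ring
  have hgginner : ⟪gg, y₀ - x⟫ = ⟪gf, y₀ - x⟫ - c * ⟪v, y₀ - x⟫ := by
    rw [hgg, inner_sub_left, real_inner_smul_left]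
  have e1 : ⟪gf, x₀ - x⟫ = ⟪gf, x₀⟫ - ⟪gf, x⟫ := inner_sub_right _ _ _
  have e2 : ⟪gf, y₀ - x⟫ = ⟪gf, y₀⟫ - ⟪gf, x⟫ := inner_sub_right _ _ _
  have e3 : ⟪gf, y₀ - x₀⟫ = ⟪gf, y₀⟫ - ⟪gf, x₀⟫ := inner_sub_right _ _ _
  constructor
  · rw [hgy, hgx, e1]
    rcases lt_or_ge (⟪gf, v⟫) 0 with h | h
    · rw [hc, if_pos h]
      rw [hvy] at *
      have : ⟪gf, y₀ - x₀⟫ = ‖y₀ - x₀‖ * (‖y₀ - x₀‖⁻¹ * ⟪gf, y₀ - x₀⟫) := by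
        field_simp
      linarith [e3, this]
    · rw [hc, if_neg (not_lt.2 h)]
      rw [hvy] at h
      have h2 := mul_nonneg hn0.le h
      have h3 : ‖y₀ - x₀‖ * (‖y₀ - x₀‖⁻¹ * ⟪gf, y₀ - x₀⟫) = ⟪gf, y₀ - x₀⟫ := by
        field_simp
      linarith [e3, h3 ▸ h2]
  · rw [hgy, hgx, hgginner, e2, hvx, hsq]
    have hcle : c ≤ 0 := by rw [hc]; split <;> linarith
    have key : ‖y₀ - x₀‖ ≤ ‖y₀ - x₀‖⁻¹ * (‖y₀ - x₀‖ * ‖y₀ - x₀‖ + ⟪y₀ - x₀, x₀ - x⟫) := by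
      rw [mul_add]
      have : ‖y₀ - x₀‖⁻¹ * (‖y₀ - x₀‖ * ‖y₀ - x₀‖) = ‖y₀ - x₀‖ := by field_simp
      nlinarith [mul_nonneg (inv_nonneg.2 hn0.le) hox]
    nlinarith [mul_nonneg (neg_nonneg.2 hcle) (sub_nonneg.2 key)]
end

section
/- With the surrogate loss g and its gradient ∇g(y₀) = ∇f(x₀) − 1{⟨∇f(x₀),v⟩<0}·⟨∇f(x₀),v⟩·v, for all x ∈ X: ⟨∇f(x₀), x₀ − x⟩ ≤ ⟨∇g(y₀), y₀ − x⟩ − 1{⟨∇f(x₀),v⟩ ≥ 0}·⟨∇f(x₀), y₀ − x₀⟩. -/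
local notation "⟪" x ", " y "⟫" => @inner ℝ _ _ x y

/-- With ∇g(y₀) = ∇f(x₀) − 1{⟨∇f(x₀),v⟩<0}·⟨∇f(x₀),v⟩·v, for all x ∈ X:
⟨∇f(x₀), x₀ − x⟩ ≤ ⟨∇g(y₀), y₀ − x⟩ − 1{⟨∇f(x₀),v⟩ ≥ 0}·⟨∇f(x₀), y₀ − x₀⟩.
Here `gf` plays the role of ∇f(x₀). -/
theorem surrogate_improved_ineq {d : ℕ} (X Y : Set (EuclideanSpace ℝ (Fin d)))
    (hXc : IsClosed X) (hX : Convex ℝ X) (hXne : X.Nonempty)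
    (hYc : IsClosed Y) (hY : Convex ℝ Y) (hXY : X ⊆ Y)
    (y₀ : EuclideanSpace ℝ (Fin d)) (hy₀ : y₀ ∈ Y) (hy₀X : y₀ ∉ X)
    (x₀ : EuclideanSpace ℝ (Fin d)) (hx₀ : x₀ ∈ X)
    (hproj : ∀ z ∈ X, dist y₀ x₀ ≤ dist y₀ z)
    (gf : EuclideanSpace ℝ (Fin d))
    (v : EuclideanSpace ℝ (Fin d)) (hv : v = ‖y₀ - x₀‖⁻¹ • (y₀ - x₀))
    (gg : EuclideanSpace ℝ (Fin d))
    (hgg : gg = gf - (if ⟪gf, v⟫ < 0 then ⟪gf, v⟫ else 0) • v) :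
    ∀ x ∈ X,
      ⟪gf, x₀ - x⟫ ≤
        ⟪gg, y₀ - x⟫ - (if 0 ≤ ⟪gf, v⟫ then ⟪gf, y₀ - x₀⟫ else 0) := by
  intro x hx
  have hne : y₀ - x₀ ≠ 0 := fun h => hy₀X (by
    have h' : y₀ = x₀ := by simpa [sub_eq_zero] using h
    rw [h']; exact hx₀)
  have hr : (0:ℝ) < ‖y₀ - x₀‖ := norm_pos_iff.mpr hne
  haveI : Nonempty X := ⟨⟨x₀, hx₀⟩⟩
  have hq : ⟪y₀ - x₀, x - x₀⟫ ≤ 0 := by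
    have hinf : ‖y₀ - x₀‖ = ⨅ w : X, ‖y₀ - (w : EuclideanSpace ℝ (Fin d))‖ := by
      apply le_antisymm
      · exact le_ciInf fun w => by simpa [dist_eq_norm] using hproj w w.2
      · exact ciInf_le ⟨0, by rintro b ⟨w, rfl⟩; exact norm_nonneg _⟩ (⟨x₀, hx₀⟩ : X)
    exact (norm_eq_iInf_iff_real_inner_le_zero hX hx₀).mp hinf x hx
  have hA : ⟪gf, v⟫ = ‖y₀ - x₀‖⁻¹ * ⟪gf, y₀ - x₀⟫ := by
    rw [hv, real_inner_smul_right]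
  have hsplit : ⟪gf, y₀ - x⟫ = ⟪gf, y₀ - x₀⟫ + ⟪gf, x₀ - x⟫ := by
    rw [← inner_add_right]; congr 1; abel
  have hBB : ⟪y₀ - x₀, y₀ - x⟫ = ‖y₀ - x₀‖ * ‖y₀ - x₀‖ - ⟪y₀ - x₀, x - x₀⟫ := by
    have h1 : (y₀ - x) = (y₀ - x₀) - (x - x₀) := by abel
    rw [h1, inner_sub_right, real_inner_self_eq_norm_mul_norm]
  have hvB : ⟪v, y₀ - x⟫ = ‖y₀ - x₀‖⁻¹ * ⟪y₀ - x₀, y₀ - x⟫ := by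
    rw [hv, real_inner_smul_left]
  by_cases hc : ⟪gf, v⟫ < 0
  · rw [hgg, if_pos hc, if_neg (not_le.mpr hc), inner_sub_left, real_inner_smul_left, sub_zero]
    have hru : ‖y₀ - x₀‖ * ‖y₀ - x₀‖⁻¹ = 1 := mul_inv_cancel₀ (ne_of_gt hr)
    have hc' : ‖y₀ - x₀‖⁻¹ * ⟪gf, y₀ - x₀⟫ < 0 := hA ▸ hc
    have hrinv : (0:ℝ) < ‖y₀ - x₀‖⁻¹ := inv_pos.mpr hr
    have hAle : ⟪gf, y₀ - x₀⟫ ≤ 0 := by nlinarith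
    have hAq : 0 ≤ ⟪gf, y₀ - x₀⟫ * ⟪y₀ - x₀, x - x₀⟫ := by
      nlinarith [mul_nonneg (neg_nonneg.2 hAle) (neg_nonneg.2 hq)]
    rw [hA, hvB, hBB, hsplit]
    have key : ‖y₀ - x₀‖⁻¹ * ⟪gf, y₀ - x₀⟫ *
        (‖y₀ - x₀‖⁻¹ * (‖y₀ - x₀‖ * ‖y₀ - x₀‖ - ⟪y₀ - x₀, x - x₀⟫)) =
        ⟪gf, y₀ - x₀⟫ - ‖y₀ - x₀‖⁻¹ * ‖y₀ - x₀‖⁻¹ * (⟪gf, y₀ - x₀⟫ * ⟪y₀ - x₀, x - x₀⟫) := by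
      field_simp
    rw [key]
    nlinarith [mul_nonneg (mul_nonneg hrinv.le hrinv.le) hAq]
  · rw [hgg, if_neg hc, if_pos (not_lt.mp hc), zero_smul, sub_zero]
    linarith [hsplit]
end

section
/- Let l₁, …, l_T and δ be non-negative real numbers with δ > 0. Then ∑_{t=1}^T l_t² / (δ + ∑_{i=1}^t l_i²) ≤ log(1 + (1/δ)·∑_{t=1}^T l_t²). -/
open Finset Real

lemma div_add_le_log_sub_log {a x : ℝ} (ha : 0 < a) (hx : 0 ≤ x) :
    x / (a + x) ≤ log (a + x) - log a := by
  have h := one_sub_inv_le_log_of_pos (x := (a + x) / a) (by positivity)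
  rw [inv_div, log_div (by positivity) ha.ne'] at h
  calc x / (a + x) = 1 - a / (a + x) := by field_simp; ring
    _ ≤ log (a + x) - log a := h

/-- Each summand is bounded by the increment of `log (δ + ∑ i < t, a i)`, so the sum telescopes. -/
lemma sum_div_add_partial_sum_le_log_sub_log {a : ℕ → ℝ} {δ : ℝ} (hδ : 0 < δ)
    (ha : ∀ t, 0 ≤ a t) (T : ℕ) :
    ∑ t ∈ range T, a t / (δ + ∑ i ∈ range (t + 1), a i) ≤
      log (δ + ∑ t ∈ range T, a t) - log δ := by
  set f : ℕ → ℝ := fun n ↦ log (δ + ∑ i ∈ range n, a i)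
  have hpartial : ∀ n, 0 ≤ ∑ i ∈ range n, a i := fun n ↦ sum_nonneg fun i _ ↦ ha i
  calc ∑ t ∈ range T, a t / (δ + ∑ i ∈ range (t + 1), a i)
      ≤ ∑ t ∈ range T, (f (t + 1) - f t) := sum_le_sum fun t _ ↦ by
        simp only [f, sum_range_succ, ← add_assoc]
        exact div_add_le_log_sub_log (by linarith [hpartial t]) (ha t)
    _ = f T - f 0 := sum_range_sub f T
    _ = log (δ + ∑ t ∈ range T, a t) - log δ := by simp [f]

theorem sum_div_le_log_general (T : ℕ) (l : ℕ → ℝ) (δ : ℝ) (hδ : 0 < δ) :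
    ∑ t ∈ Finset.range T, l t ^ 2 / (δ + ∑ i ∈ Finset.range (t + 1), l i ^ 2) ≤
      Real.log (1 + (1 / δ) * ∑ t ∈ Finset.range T, l t ^ 2) := by
  have hS : 0 ≤ ∑ t ∈ range T, l t ^ 2 := sum_nonneg fun t _ ↦ sq_nonneg (l t)
  have hrhs : 1 + (1 / δ) * ∑ t ∈ range T, l t ^ 2 = (δ + ∑ t ∈ range T, l t ^ 2) / δ := by
    field_simp
  rw [hrhs, log_div (by positivity) hδ.ne']
  exact sum_div_add_partial_sum_le_log_sub_log hδ (fun t ↦ sq_nonneg (l t)) T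

/-- Let l₁,…,l_T and δ > 0 be non-negative reals. Then
∑_{t=1}^T l_t²/(δ + ∑_{i=1}^t l_i²) ≤ log(1 + (1/δ)·∑_{t=1}^T l_t²). -/
theorem sum_div_le_log (T : ℕ) (l : ℕ → ℝ) (δ : ℝ) (hδ : 0 < δ)
    (hl : ∀ t, 0 ≤ l t) :
    ∑ t ∈ Finset.range T, l t ^ 2 / (δ + ∑ i ∈ Finset.range (t + 1), l i ^ 2) ≤
      Real.log (1 + (1 / δ) * ∑ t ∈ Finset.range T, l t ^ 2) :=
  sum_div_le_log_general T l δ hδ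
end

section
/- Let a, b, c, d, x > 0 satisfy x − d ≤ a·ln(bx + c). Then x − d ≤ a·ln(2(ab·ln(2ab/e) + db + c)). -/
/-- Let a, b, c, d, x > 0 satisfy x − d ≤ a·ln(bx + c). Then
x − d ≤ a·ln(2(ab·ln(2ab/e) + db + c)). -/
theorem log_self_bound (a b c d x : ℝ)
    (ha : 0 < a) (hb : 0 < b) (hc : 0 < c) (hd : 0 < d) (hx : 0 < x)
    (h : x - d ≤ a * Real.log (b * x + c)) :
    x - d ≤ a * Real.log (2 * (a * b * Real.log (2 * a * b / Real.exp 1) + d * b + c)) := by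
  have hbxc : (0:ℝ) < b * x + c := by positivity
  have hk : (0:ℝ) < 2 * a * b := by positivity
  have hL : Real.log (2 * a * b / Real.exp 1) = Real.log (2 * a * b) - 1 := by
    rw [Real.log_div hk.ne' (Real.exp_ne_zero 1), Real.log_exp]
  -- log(bx+c) ≤ (bx+c)/(2ab) + log(2ab) - 1
  have h1 : Real.log (b * x + c) ≤ (b * x + c) / (2 * a * b) + (Real.log (2 * a * b) - 1) := by
    have ht : (0:ℝ) < (b * x + c) / (2 * a * b) := by positivity
    have := Real.log_le_sub_one_of_pos ht
    rw [Real.log_div hbxc.ne' hk.ne'] at this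
    linarith
  have h2 : x - d ≤ (b * x + c) / (2 * b) + a * (Real.log (2 * a * b) - 1) := by
    have ha' := mul_le_mul_of_nonneg_left h1 ha.le
    have heq : a * ((b * x + c) / (2 * a * b)) = (b * x + c) / (2 * b) := by
      field_simp
    nlinarith [ha']
  have h3 : b * x + c ≤ 2 * (a * b * (Real.log (2 * a * b) - 1) + d * b + c) := by
    have hb2 : (0:ℝ) < 2 * b := by positivity
    have key : (x - d - a * (Real.log (2 * a * b) - 1)) * (2 * b) ≤ b * x + c :=
      (le_div_iff₀ hb2).mp (by linarith)
    nlinarith [key]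
  have h4 : Real.log (b * x + c) ≤ Real.log (2 * (a * b * (Real.log (2 * a * b) - 1) + d * b + c)) :=
    Real.log_le_log hbxc h3
  rw [hL]
  calc x - d ≤ a * Real.log (b * x + c) := h
    _ ≤ _ := mul_le_mul_of_nonneg_left h4 ha.le
end

section
/- The expert-loss ℓ(y) = ⟨u, y − y₀⟩ + (β/2)⟨u, y − y₀⟩², with 0 < β ≤ 1/(8GD), ‖u‖ ≤ G, and ‖y − y₀‖ ≤ 2D for all y in the domain, is (β/4)-exp-concave on that domain, and its gradient satisfies ‖∇ℓ(y)‖² ≤ 2G². -/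
/-!
The loss depends on `y` only through the affine form `t = ⟪u, y - y₀⟫`, so exp-concavity reduces
to the scalar quadratic `f t = t + (β / 2) t ^ 2`. For a scalar `f`, `exp (-α f)` has second
derivative `α exp (-α f) (α f' ^ 2 - f'')`, so it is concave wherever `α f' ^ 2 ≤ f''`; with
`α = β / 4` this reads `(1 + β t) ^ 2 ≤ 4`. On the domain, Cauchy–Schwarz gives
`|β t| ≤ 2 β G D ≤ 1 / 4`, which is enough for this and also for
`‖∇ℓ y‖ ^ 2 = (1 + β t) ^ 2 ‖u‖ ^ 2 ≤ 2 G ^ 2`.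
-/

local notation "⟪" x ", " y "⟫" => @inner ℝ _ _ x y

open Real Set Metric

theorem concaveOn_exp_neg_mul_of_mul_sq_deriv_le {s : Set ℝ} (hs : Convex ℝ s)
    {f f' f'' : ℝ → ℝ} {α : ℝ} (hα : 0 ≤ α)
    (hf : ∀ t, HasDerivAt f (f' t) t) (hf' : ∀ t, HasDerivAt f' (f'' t) t)
    (h : ∀ t ∈ interior s, α * f' t ^ 2 ≤ f'' t) :
    ConcaveOn ℝ s (fun t => exp (-α * f t)) := by
  have hd : ∀ t, HasDerivAt (fun t => exp (-α * f t)) (exp (-α * f t) * (-α * f' t)) t :=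
    fun t => ((hf t).const_mul (-α)).exp
  have hd' : ∀ t, HasDerivAt (fun t => exp (-α * f t) * (-α * f' t))
      (exp (-α * f t) * (α * (α * f' t ^ 2 - f'' t))) t :=
    fun t => ((hd t).mul ((hf' t).const_mul (-α))).congr_deriv (by ring)
  refine concaveOn_of_hasDerivWithinAt2_nonpos hs
    (fun t _ => (hd t).continuousAt.continuousWithinAt) (fun t _ => (hd t).hasDerivWithinAt)
    (fun t _ => (hd' t).hasDerivWithinAt) fun t ht => ?_
  exact mul_nonpos_of_nonneg_of_nonpos (exp_pos _).le
    (mul_nonpos_of_nonneg_of_nonpos hα (sub_nonpos.mpr (h t ht)))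

theorem concaveOn_exp_neg_quarter_mul_quadratic {β : ℝ} (hβ : 0 < β) :
    ConcaveOn ℝ (Icc (-(1 / β)) (1 / β)) (fun t => exp (-(β / 4) * (t + β / 2 * t ^ 2))) := by
  refine concaveOn_exp_neg_mul_of_mul_sq_deriv_le (convex_Icc _ _) (by positivity)
    (f' := fun t => 1 + β * t) (f'' := fun _ => β) (fun t => ?_) (fun t => ?_) fun t ht => ?_
  · exact (((hasDerivAt_id t).add ((hasDerivAt_pow 2 t).const_mul (β / 2)))).congr_deriv
      (by simp only [Nat.cast_ofNat, Nat.add_one_sub_one, pow_one]; ring)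
  · simpa using ((hasDerivAt_id t).const_mul β).const_add 1
  · rw [interior_Icc, mem_Ioo, neg_lt, lt_div_iff₀ hβ, lt_div_iff₀ hβ] at ht
    have h4 : (1 + β * t) ^ 2 ≤ 4 := by nlinarith
    nlinarith

theorem ConcaveOn.comp_inner_sub {E : Type*} [NormedAddCommGroup E] [InnerProductSpace ℝ E]
    {g : ℝ → ℝ} {s : Set ℝ} (hg : ConcaveOn ℝ s g) (u y₀ : E) :
    ConcaveOn ℝ ((fun y => ⟪u, y - y₀⟫) ⁻¹' s) (fun y => g ⟪u, y - y₀⟫) := by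
  let φ : E →ᵃ[ℝ] ℝ := (innerₗ E u).toAffineMap - AffineMap.const ℝ E ⟪u, y₀⟫
  have hφ : ⇑φ = fun y => ⟪u, y - y₀⟫ := by
    ext y; simp [φ, inner_sub_right]
  have hgφ := hg.comp_affineMap φ
  rwa [hφ] at hgφ

theorem abs_mul_inner_sub_le {E : Type*} [NormedAddCommGroup E] [InnerProductSpace ℝ E]
    {u y y₀ : E} {β G D : ℝ} (hβ0 : 0 < β) (hβ : β ≤ 1 / (8 * G * D))
    (hu : ‖u‖ ≤ G) (hy : ‖y‖ ≤ D) (hy₀ : ‖y₀‖ ≤ D) :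
    |β * ⟪u, y - y₀⟫| ≤ 1 / 4 := by
  have hβGD : β * (8 * G * D) ≤ 1 :=
    (le_div_iff₀ (one_div_pos.mp (hβ0.trans_le hβ))).mp hβ
  have hG : 0 ≤ G := (norm_nonneg u).trans hu
  calc |β * ⟪u, y - y₀⟫| = β * |⟪u, y - y₀⟫| := by rw [abs_mul, abs_of_pos hβ0]
    _ ≤ β * (‖u‖ * (‖y‖ + ‖y₀‖)) := by
      gcongr
      exact (abs_real_inner_le_norm _ _).trans (by gcongr; exact norm_sub_le _ _)
    _ ≤ β * (G * (D + D)) := by gcongr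
    _ ≤ 1 / 4 := by linarith

theorem norm_add_smul_self_sq_le {E : Type*} [SeminormedAddCommGroup E] [NormedSpace ℝ E]
    {u : E} {c G : ℝ} (hu : ‖u‖ ≤ G) (hc : |c| ≤ 1 / 4) :
    ‖u + c • u‖ ^ 2 ≤ 2 * G ^ 2 := by
  have hc' := abs_le.mp hc
  have hsq : (1 + c) ^ 2 ≤ 2 := by nlinarith
  calc ‖u + c • u‖ ^ 2 = ‖(1 + c) • u‖ ^ 2 := by rw [add_smul, one_smul]
    _ = (1 + c) ^ 2 * ‖u‖ ^ 2 := by rw [norm_smul, mul_pow, norm_eq_abs, sq_abs]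
    _ ≤ 2 * G ^ 2 := by gcongr

theorem expert_loss_exp_properties_general {d : ℕ}
    (u y₀ : EuclideanSpace ℝ (Fin d)) (β G D : ℝ)
    (hβ0 : 0 < β) (hβ : β ≤ 1 / (8 * G * D))
    (hu : ‖u‖ ≤ G) (hy₀ : ‖y₀‖ ≤ D)
    (ℓ : EuclideanSpace ℝ (Fin d) → ℝ)
    (hℓ : ∀ y, ℓ y = ⟪u, y - y₀⟫ + β / 2 * ⟪u, y - y₀⟫ ^ 2) :
    ConcaveOn ℝ (Metric.closedBall (0 : EuclideanSpace ℝ (Fin d)) D)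
        (fun y => Real.exp (-(β / 4) * ℓ y)) ∧
      (∀ y ∈ Metric.closedBall (0 : EuclideanSpace ℝ (Fin d)) D,
        ‖u + (β * ⟪u, y - y₀⟫) • u‖ ^ 2 ≤ 2 * G ^ 2) := by
  have hβt : ∀ y ∈ closedBall (0 : EuclideanSpace ℝ (Fin d)) D, |β * ⟪u, y - y₀⟫| ≤ 1 / 4 :=
    fun y hy => abs_mul_inner_sub_le hβ0 hβ hu (mem_closedBall_zero_iff.mp hy) hy₀
  refine ⟨?_, fun y hy => norm_add_smul_self_sq_le hu (hβt y hy)⟩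
  simp only [hℓ]
  refine ((concaveOn_exp_neg_quarter_mul_quadratic hβ0).comp_inner_sub u y₀).subset
    (fun y hy => ?_) (convex_closedBall _ _)
  obtain ⟨hlo, hhi⟩ := abs_le.mp (hβt y hy)
  rw [mem_preimage, mem_Icc, neg_le, le_div_iff₀ hβ0, le_div_iff₀ hβ0]
  constructor <;> linarith

/-- The expert-loss ℓ(y) = ⟨u, y − y₀⟩ + (β/2)⟨u, y − y₀⟩², with 0 < β ≤ 1/(8GD),
‖u‖ ≤ G, on the domain Y = {y : ‖y‖ ≤ D} (with ‖y₀‖ ≤ D, so ‖y − y₀‖ ≤ 2D),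
is (β/4)-exp-concave on Y, and its gradient ∇ℓ(y) = u + β⟨u, y−y₀⟩u
satisfies ‖∇ℓ(y)‖² ≤ 2G². -/
theorem expert_loss_exp_properties {d : ℕ}
    (u y₀ : EuclideanSpace ℝ (Fin d)) (β G D : ℝ)
    (hβ0 : 0 < β) (hβ : β ≤ 1 / (8 * G * D)) (hG : 0 < G) (hD : 0 < D)
    (hu : ‖u‖ ≤ G) (hy₀ : ‖y₀‖ ≤ D)
    (ℓ : EuclideanSpace ℝ (Fin d) → ℝ)
    (hℓ : ∀ y, ℓ y = ⟪u, y - y₀⟫ + β / 2 * ⟪u, y - y₀⟫ ^ 2) :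
    ConcaveOn ℝ (Metric.closedBall (0 : EuclideanSpace ℝ (Fin d)) D)
        (fun y => Real.exp (-(β / 4) * ℓ y)) ∧
      (∀ y ∈ Metric.closedBall (0 : EuclideanSpace ℝ (Fin d)) D,
        ‖u + (β * ⟪u, y - y₀⟫) • u‖ ^ 2 ≤ 2 * G ^ 2) :=
  expert_loss_exp_properties_general u y₀ β G D hβ0 hβ hu hy₀ ℓ hℓ
end

section
/- The enhanced expert-loss ℓ̂(y) = ⟨u, y − y₀⟩ + (λ/(2G²))‖u‖²·‖y − x₀‖² is (λ/G²)‖u‖²-strongly convex, and if ‖u‖ ≤ G, ‖y‖ ≤ D, ‖x₀‖ ≤ D, and 0 < λ ≤ 1, then ‖∇ℓ̂(y)‖² ≤ (1 + 2D/G)²·‖u‖². -/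
local notation "⟪" x ", " y "⟫" => @inner ℝ _ _ x y

/-- The enhanced expert-loss ℓ̂(y) = ⟨u, y − y₀⟩ + (λ/(2G²))‖u‖²‖y − x₀‖² is
(λ/G²)‖u‖²-strongly convex (gradient ∇ℓ̂(y) = u + ((λ/G²)‖u‖²)(y − x₀)), and if
‖u‖ ≤ G, ‖y‖ ≤ D, ‖x₀‖ ≤ D, 0 < λ ≤ 1, then ‖∇ℓ̂(y)‖² ≤ (1 + 2D/G)²‖u‖². -/
theorem enhanced_expert_loss_properties {d : ℕ}
    (u y₀ x₀ : EuclideanSpace ℝ (Fin d)) (lam G D : ℝ)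
    (hlam0 : 0 < lam) (hlam1 : lam ≤ 1) (hG : 0 < G) (hD : 0 < D)
    (hu : ‖u‖ ≤ G) (hx₀ : ‖x₀‖ ≤ D)
    (ℓ : EuclideanSpace ℝ (Fin d) → ℝ)
    (hℓ : ∀ y, ℓ y = ⟪u, y - y₀⟫ + lam / (2 * G ^ 2) * ‖u‖ ^ 2 * ‖y - x₀‖ ^ 2) :
    (∀ x y : EuclideanSpace ℝ (Fin d),
        ℓ x ≥ ℓ y + ⟪u + (lam / G ^ 2 * ‖u‖ ^ 2) • (y - x₀), x - y⟫
          + lam / G ^ 2 * ‖u‖ ^ 2 / 2 * ‖x - y‖ ^ 2) ∧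
      (∀ y : EuclideanSpace ℝ (Fin d), ‖y‖ ≤ D →
        ‖u + (lam / G ^ 2 * ‖u‖ ^ 2) • (y - x₀)‖ ^ 2 ≤ (1 + 2 * D / G) ^ 2 * ‖u‖ ^ 2) := by
  constructor
  · intro x y
    have key : ‖x - x₀‖ ^ 2 = ‖y - x₀‖ ^ 2 + 2 * ⟪y - x₀, x - y⟫ + ‖x - y‖ ^ 2 := by
      have h : x - x₀ = (y - x₀) + (x - y) := by abel
      rw [h, norm_add_sq_real]
    have hinner : ⟪u, x - y₀⟫ = ⟪u, y - y₀⟫ + ⟪u, x - y⟫ := by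
      have h : x - y₀ = (y - y₀) + (x - y) := by abel
      rw [h]; exact inner_add_right _ _ _
    have hgrad : ⟪u + (lam / G ^ 2 * ‖u‖ ^ 2) • (y - x₀), x - y⟫
        = ⟪u, x - y⟫ + (lam / G ^ 2 * ‖u‖ ^ 2) * ⟪y - x₀, x - y⟫ := by
      rw [inner_add_left, real_inner_smul_left]
    have hA : lam / (2 * G ^ 2) * ‖u‖ ^ 2 = lam / G ^ 2 * ‖u‖ ^ 2 / 2 := by ring
    rw [hℓ x, hℓ y, hinner, hgrad, key, hA]
    ring_nf
    try linarith
  · intro y hy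
    set c : ℝ := lam / G ^ 2 * ‖u‖ ^ 2 with hc
    have hc0 : 0 ≤ c := by positivity
    have hcu : c ≤ ‖u‖ / G := by
      rw [hc, div_mul_eq_mul_div, div_le_div_iff₀ (by positivity) hG]
      nlinarith [norm_nonneg u, mul_le_mul_of_nonneg_right hu (norm_nonneg u),
        mul_nonneg (mul_nonneg (norm_nonneg u) (norm_nonneg u)) hG.le]
    have hyx : ‖y - x₀‖ ≤ 2 * D := by
      calc ‖y - x₀‖ ≤ ‖y‖ + ‖x₀‖ := norm_sub_le _ _
        _ ≤ 2 * D := by linarith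
    have h1 : ‖u + c • (y - x₀)‖ ≤ ‖u‖ + c * ‖y - x₀‖ := by
      calc ‖u + c • (y - x₀)‖ ≤ ‖u‖ + ‖c • (y - x₀)‖ := norm_add_le _ _
        _ = ‖u‖ + |c| * ‖y - x₀‖ := by rw [norm_smul]; rfl
        _ = ‖u‖ + c * ‖y - x₀‖ := by rw [abs_of_nonneg hc0]
    have h2 : ‖u‖ + c * ‖y - x₀‖ ≤ (1 + 2 * D / G) * ‖u‖ := by
      have : c * ‖y - x₀‖ ≤ (‖u‖ / G) * (2 * D) := by
        apply mul_le_mul hcu hyx (norm_nonneg _) (by positivity)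
      have heq : (1 + 2 * D / G) * ‖u‖ = ‖u‖ + (‖u‖ / G) * (2 * D) := by ring
      linarith
    have hnn : (0:ℝ) ≤ (1 + 2 * D / G) * ‖u‖ := by positivity
    nlinarith [norm_nonneg (u + c • (y - x₀))]
end

section
/- Suppose f_t : X → ℝ are λ-strongly convex, g_t : Y → ℝ satisfy ⟨∇f_t(x_t), x_t − x⟩ ≤ ⟨∇g_t(y_t), y_t − x⟩ for all x ∈ X, and define the expert-loss ℓ_t(y) = ⟨∇g_t(y_t), y⟩ + (λ/2)‖y − x_t‖². Then for any comparator x ∈ X and any expert iterates y_t^i ∈ Y: ∑_t f_t(x_t) − ∑_t f_t(x) ≤ ∑_t ⟨∇g_t(y_t), y_t − y_t^i⟩ + ∑_t (ℓ_t(y_t^i) − ℓ_t(x)) − (λ/2)∑_t ‖x_t − y_t^i‖². -/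
local notation "⟪" x ", " y "⟫" => @inner ℝ _ _ x y

/-- Regret decomposition for strongly convex functions: with f_t λ-strongly convex,
surrogate gradients gg_t satisfying ⟨∇f_t(x_t), x_t − x⟩ ≤ ⟨gg_t, y_t − x⟩ for all x ∈ X,
and expert-loss ℓ_t(y) = ⟨gg_t, y⟩ + (λ/2)‖y − x_t‖², one has
∑ f_t(x_t) − ∑ f_t(x) ≤ ∑⟨gg_t, y_t − y_t^i⟩ + ∑(ℓ_t(y_t^i) − ℓ_t(x))
  − (λ/2)∑‖x_t − y_t^i‖². -/
theorem regret_decomposition_sc {dim T : ℕ}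
    (X Y : Set (EuclideanSpace ℝ (Fin dim)))
    (hX : Convex ℝ X) (hXY : X ⊆ Y)
    (f : Fin T → EuclideanSpace ℝ (Fin dim) → ℝ)
    (gf gg : Fin T → EuclideanSpace ℝ (Fin dim))
    (xt yt yi : Fin T → EuclideanSpace ℝ (Fin dim))
    (lam : ℝ) (hlam : 0 < lam)
    (hxt : ∀ t, xt t ∈ X) (hyt : ∀ t, yt t ∈ Y) (hyi : ∀ t, yi t ∈ Y)
    (x : EuclideanSpace ℝ (Fin dim)) (hx : x ∈ X)
    (hsc : ∀ t, ∀ z ∈ X,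
      f t z ≥ f t (xt t) + ⟪gf t, z - xt t⟫ + lam / 2 * ‖z - xt t‖ ^ 2)
    (hsurr : ∀ t, ∀ z ∈ X, ⟪gf t, xt t - z⟫ ≤ ⟪gg t, yt t - z⟫) :
    ∑ t, f t (xt t) - ∑ t, f t x ≤
      ∑ t, ⟪gg t, yt t - yi t⟫
        + ∑ t, ((⟪gg t, yi t⟫ + lam / 2 * ‖yi t - xt t‖ ^ 2)
            - (⟪gg t, x⟫ + lam / 2 * ‖x - xt t‖ ^ 2))
        - lam / 2 * ∑ t, ‖xt t - yi t‖ ^ 2 := by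
  have h : ∀ t, f t (xt t) - f t x ≤
      ⟪gg t, yt t - yi t⟫
        + ((⟪gg t, yi t⟫ + lam / 2 * ‖yi t - xt t‖ ^ 2)
            - (⟪gg t, x⟫ + lam / 2 * ‖x - xt t‖ ^ 2))
        - lam / 2 * ‖xt t - yi t‖ ^ 2 := by
    intro t
    have h1 := hsc t x hx
    have h2 := hsurr t x hx
    have hn : ‖yi t - xt t‖ = ‖xt t - yi t‖ := norm_sub_rev _ _
    rw [hn]
    simp only [inner_sub_right] at *
    linarith
  have hsum := Finset.sum_le_sum (fun t (_ : t ∈ Finset.univ) => h t)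
  simpa [Finset.sum_sub_distrib, Finset.sum_add_distrib, Finset.mul_sum] using hsum
end
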